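/- arXiv:1703.09036 — 2 statements merged into one kernel-verified Lean document; each statement's English description precedes it below -/
import Mathlib

section
/- For independent Bernoulli random variables, the Harris–FKG inequality for decreasing events: if A and B are both decreasing events in a finite product of independent Bernoulli measures on {0,1}^E, then P(A ∩ B) ≥ P(A)·P(B). -/
open MeasureTheory
open scoped ENNReal

/-!
Under coordinatewise order, `{0,1}^E` is a finite distributive lattice, and a product measure on
it is log-modular on atoms: `ν{a ⊓ b} ν{a ⊔ b} = ν{a} ν{b}`, since coordinatewise `{min, max}`
is just `{a e, b e}`. The FKG inequality for log-supermodular weights on a finite distributive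
lattice then correlates the indicators of any two upper sets; decreasing events are upper sets of
the dual lattice, on which the log-modularity condition is the same.
-/

lemma IsUpperSet.monotone_indicator_one {α β : Type*} [Preorder α] [Zero β] [One β] [Preorder β]
    [ZeroLEOneClass β] {A : Set α} (hA : IsUpperSet A) :
    Monotone (A.indicator (1 : α → β)) := by
  intro a b hab
  by_cases ha : a ∈ A
  · simp [ha, hA hab ha]
  · simp [ha, Set.indicator_nonneg]

section FKG

variable {α β : Type*} [DistribLattice α] [Fintype α] [CommSemiring β] [LinearOrder β]
  [IsStrictOrderedRing β] [ExistsAddOfLE β] {μ : α → β} {A B : Set α}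

theorem fkg_isUpperSet (hμ₀ : 0 ≤ μ) (hμ : ∀ a b, μ a * μ b ≤ μ (a ⊓ b) * μ (a ⊔ b))
    (hA : IsUpperSet A) (hB : IsUpperSet B) :
    (∑ a, A.indicator μ a) * ∑ a, B.indicator μ a ≤ (∑ a, μ a) * ∑ a, (A ∩ B).indicator μ a := by
  have h := fkg (A.indicator 1) (B.indicator 1) μ hμ₀
    (Set.indicator_nonneg fun _ _ ↦ zero_le_one) (Set.indicator_nonneg fun _ _ ↦ zero_le_one)
    hA.monotone_indicator_one hB.monotone_indicator_one hμ
  have h_inter : ∀ a, A.indicator (1 : α → β) a * B.indicator 1 a = (A ∩ B).indicator 1 a := by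
    simp [Set.inter_indicator_one]
  have h_weight : ∀ (S : Set α) a, μ a * S.indicator 1 a = S.indicator μ a := by
    intro S a
    by_cases ha : a ∈ S <;> simp [ha]
  simpa only [h_inter, h_weight] using h

theorem fkg_isLowerSet (hμ₀ : 0 ≤ μ) (hμ : ∀ a b, μ a * μ b ≤ μ (a ⊓ b) * μ (a ⊔ b))
    (hA : IsLowerSet A) (hB : IsLowerSet B) :
    (∑ a, A.indicator μ a) * ∑ a, B.indicator μ a ≤ (∑ a, μ a) * ∑ a, (A ∩ B).indicator μ a :=
  fkg_isUpperSet (α := αᵒᵈ) hμ₀ (fun a b ↦ (hμ a b).trans_eq (mul_comm _ _)) hA.toDual hB.toDual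

end FKG

namespace MeasureTheory.Measure

theorem pi_singleton_inf_mul_pi_singleton_sup {ι : Type*} [Fintype ι] {β : ι → Type*}
    [∀ i, LinearOrder (β i)] [∀ i, MeasurableSpace (β i)] (μ : ∀ i, Measure (β i))
    [∀ i, SigmaFinite (μ i)] (a b : ∀ i, β i) :
    Measure.pi μ {a ⊓ b} * Measure.pi μ {a ⊔ b} = Measure.pi μ {a} * Measure.pi μ {b} := by
  simp only [pi_singleton, ← Finset.prod_mul_distrib]
  refine Finset.prod_congr rfl fun i _ ↦ ?_
  rcases le_total (a i) (b i) with h | h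
  · simp [h]
  · simp [h, mul_comm]

theorem real_eq_sum_indicator {α : Type*} [Fintype α] [MeasurableSpace α]
    [MeasurableSingletonClass α] (ν : Measure α) [SigmaFinite ν] (A : Set α) :
    ν.real A = ∑ a, A.indicator (fun a ↦ ν.real {a}) a := by
  classical
  rw [Finset.sum_indicator_eq_sum_filter, sum_measureReal_singleton]
  simp

theorem fkg_isLowerSet {α : Type*} [DistribLattice α] [Finite α] [MeasurableSpace α]
    [MeasurableSingletonClass α] (ν : Measure α) [IsFiniteMeasure ν]
    (hν : ∀ a b, ν {a} * ν {b} ≤ ν {a ⊓ b} * ν {a ⊔ b}) {A B : Set α}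
    (hA : IsLowerSet A) (hB : IsLowerSet B) : ν A * ν B ≤ ν Set.univ * ν (A ∩ B) := by
  have := Fintype.ofFinite α
  have hν_real : ∀ a b, ν.real {a} * ν.real {b} ≤ ν.real {a ⊓ b} * ν.real {a ⊔ b} := by
    intro a b
    simp only [measureReal_def, ← ENNReal.toReal_mul]
    exact ENNReal.toReal_mono (by finiteness) (hν a b)
  have h := _root_.fkg_isLowerSet (fun _ ↦ measureReal_nonneg) hν_real hA hB
  rw [sum_measureReal_singleton, Finset.coe_univ, ← real_eq_sum_indicator,
    ← real_eq_sum_indicator, ← real_eq_sum_indicator] at h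
  simp only [measureReal_def, ← ENNReal.toReal_mul] at h
  exact (ENNReal.toReal_le_toReal (by finiteness) (by finiteness)).1 h

theorem pi_fkg_isLowerSet {ι : Type*} [Fintype ι] {β : ι → Type*} [∀ i, LinearOrder (β i)]
    [∀ i, Finite (β i)] [∀ i, MeasurableSpace (β i)] [∀ i, MeasurableSingletonClass (β i)]
    (μ : ∀ i, Measure (β i)) [∀ i, IsProbabilityMeasure (μ i)] {A B : Set (∀ i, β i)}
    (hA : IsLowerSet A) (hB : IsLowerSet B) :
    Measure.pi μ A * Measure.pi μ B ≤ Measure.pi μ (A ∩ B) := by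
  simpa using fkg_isLowerSet (Measure.pi μ)
    (fun a b ↦ (pi_singleton_inf_mul_pi_singleton_sup μ a b).ge) hA hB

end MeasureTheory.Measure

/-- Harris–FKG inequality for decreasing events: if `A` and `B` are decreasing events
in a finite product of independent Bernoulli measures on `{0,1}^E`, then
`P(A ∩ B) ≥ P(A)·P(B)`. -/
theorem harris_fkg_decreasing {E : Type*} [Fintype E] (p : E → ℝ≥0∞) (hp : ∀ e, p e ≤ 1)
    (A B : Set (E → Bool))
    (hA : ∀ ω ω' : E → Bool, ω' ≤ ω → ω ∈ A → ω' ∈ A)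
    (hB : ∀ ω ω' : E → Bool, ω' ≤ ω → ω ∈ B → ω' ∈ B) :
    (Measure.pi fun e => (PMF.bernoulli (p e).toNNReal (by simpa using ENNReal.toNNReal_mono ENNReal.one_ne_top (hp e))).toMeasure) A *
        (Measure.pi fun e => (PMF.bernoulli (p e).toNNReal (by simpa using ENNReal.toNNReal_mono ENNReal.one_ne_top (hp e))).toMeasure) B ≤
      (Measure.pi fun e => (PMF.bernoulli (p e).toNNReal (by simpa using ENNReal.toNNReal_mono ENNReal.one_ne_top (hp e))).toMeasure) (A ∩ B) :=
  Measure.pi_fkg_isLowerSet _ hA hB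
end

section
/- Upper bound on accessibility probability: define recursively α_{ij}(t) = 1 − ∏_{ℓ=1}^{N} (1 − α_{iℓ}(t−1) p_{ℓj}(t)) with α_{ij}(1) = p_{ij}(1) and the convention α_{ii}(t) = 1 (waiting at a node is always possible, i.e., p_{ℓℓ}(t) = 1). Then for all nodes i, j and all T ≥ 1, P(i →^T j) ≤ α_{ij}(T). -/
/-!
Reaching `j` within `t + 1` slots means reaching some `ℓ` within `t` slots and then either
waiting (`ℓ = j`) or crossing the edge `ℓ → j` open in slot `t`. Reaching `ℓ` depends only
on the earlier slots, hence is independent of that edge, so each of these `N` events has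
probability `P(i →^t ℓ) p_{ℓj}(t)` (for `ℓ = j` this uses `p_{jj}(t) = 1`). All of them are
increasing in the configuration, so by the Harris (FKG) inequality for the product measure
their complements are positively correlated: the probability that none occurs is at least
`∏_ℓ (1 - P(i →^t ℓ) p_{ℓj}(t))`. Induction on `t`, started from the paths of length zero.
-/

open MeasureTheory
open scoped ENNReal

/-- Configuration space of a random temporal network on `N` nodes and `T` time slots. -/
abbrev TempConfig (N T : ℕ) := Fin N × Fin N × Fin T → Bool

/-- Product Bernoulli measure: edge `(u,v)` is open at slot `t` with probability `p u v t`,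
independently of everything else. -/
noncomputable def tempMeasure (N T : ℕ) (p : Fin N → Fin N → ℕ → ℝ≥0∞)
    (hp : ∀ u v t, p u v t ≤ 1) : Measure (TempConfig N T) :=
  Measure.pi fun e => (PMF.bernoulli (p e.1 e.2.1 e.2.2).toNNReal
    (by simpa using (ENNReal.toNNReal_le_toNNReal (ne_top_of_le_ne_top ENNReal.one_ne_top
      (hp e.1 e.2.1 e.2.2)) ENNReal.one_ne_top).2 (hp e.1 e.2.1 e.2.2))).toMeasure

/-- `j` is accessible from `i` within the first `t` slots (waiting allowed). -/
def TAccess {N T : ℕ} (i j : Fin N) (t : ℕ) (ω : TempConfig N T) : Prop :=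
  ∃ f : ℕ → Fin N, f 0 = i ∧ f t = j ∧
    ∀ s : Fin T, (s : ℕ) < t →
      f (s : ℕ) = f ((s : ℕ) + 1) ∨ ω (f (s : ℕ), f ((s : ℕ) + 1), s) = true

/-- The recursive quantity `α_{ij}(t)` (0-indexed: `alphaE p i t j` is `α_{ij}` after
`t+1` slots): `α_{ij}(1) = p_{ij}(1)` and
`α_{ij}(t+1) = 1 - ∏_ℓ (1 - α_{iℓ}(t) p_{ℓj}(t+1))`. -/
noncomputable def alphaE {N : ℕ} (p : Fin N → Fin N → ℕ → ℝ≥0∞) (i : Fin N) :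
    ℕ → Fin N → ℝ≥0∞
  | 0, j => p i j 0
  | t + 1, j => 1 - ∏ ℓ : Fin N, (1 - alphaE p i t ℓ * p ℓ j (t + 1))

open ProbabilityTheory Finset

lemma measureReal_eq_sum_mul_indicator {α : Type*} [Fintype α] [MeasurableSpace α]
    [MeasurableSingletonClass α] (μ : Measure α) [IsFiniteMeasure μ] (s : Set α) :
    μ.real s = ∑ a, μ.real {a} * s.indicator 1 a := by
  classical
  simp [Set.indicator_apply, ← Finset.sum_filter]

section Harris

variable {α : Type*} [DistribLattice α] [Fintype α] [MeasurableSpace α]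
  [MeasurableSingletonClass α] {μ : Measure α} [IsProbabilityMeasure μ]

theorem IsLowerSet.measure_mul_le_measure_inter
    (hμ : ∀ a b, μ {a} * μ {b} ≤ μ {a ⊓ b} * μ {a ⊔ b}) {s t : Set α}
    (hs : IsLowerSet s) (ht : IsLowerSet t) : μ s * μ t ≤ μ (s ∩ t) := by
  have hμ' (a b : α) : μ.real {a} * μ.real {b} ≤ μ.real {a ⊓ b} * μ.real {a ⊔ b} := by
    simpa [measureReal_def, ENNReal.toReal_mul] using
      ENNReal.toReal_mono (by finiteness) (hμ a b)
  have hanti {u : Set α} (hu : IsLowerSet u) : Antitone (u.indicator (1 : α → ℝ)) :=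
    fun a b hab => by
      by_cases hb : b ∈ u
      · simp [hb, hu hab hb]
      · simp [hb, Set.indicator_nonneg]
  have key : (∑ a, μ.real {a} * s.indicator 1 a) * ∑ a, μ.real {a} * t.indicator 1 a ≤
      (∑ a, μ.real {a}) * ∑ a, μ.real {a} * (s.indicator 1 a * t.indicator 1 a) :=
    fkg (α := αᵒᵈ) (μ := fun a => μ.real {OrderDual.ofDual a})
      (f := fun a => s.indicator 1 (OrderDual.ofDual a))
      (g := fun a => t.indicator 1 (OrderDual.ofDual a))
      (fun _ => measureReal_nonneg) (fun _ => Set.indicator_nonneg (fun _ _ => zero_le_one) _)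
      (fun _ => Set.indicator_nonneg (fun _ _ => zero_le_one) _)
      (fun _ _ h => hanti hs h) (fun _ _ h => hanti ht h)
      (fun a b => (hμ' _ _).trans_eq (mul_comm _ _))
  simp only [← Pi.mul_apply (s.indicator _), ← Set.inter_indicator_one,
    ← measureReal_eq_sum_mul_indicator, sum_measureReal_singleton] at key
  rw [← ENNReal.toReal_le_toReal (by finiteness) (by finiteness), ENNReal.toReal_mul]
  simpa [measureReal_def] using key

theorem IsLowerSet.prod_measure_le_measure_biInter
    (hμ : ∀ a b, μ {a} * μ {b} ≤ μ {a ⊓ b} * μ {a ⊔ b}) {ι : Type*} (I : Finset ι)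
    {s : ι → Set α} (hs : ∀ i ∈ I, IsLowerSet (s i)) :
    ∏ i ∈ I, μ (s i) ≤ μ (⋂ i ∈ I, s i) := by
  classical
  induction I using Finset.induction_on with
  | empty => simp
  | insert k I hk ih =>
    rw [prod_insert hk, Finset.set_biInter_insert]
    have hI : ∀ i ∈ I, IsLowerSet (s i) := fun i hi => hs i (mem_insert_of_mem hi)
    calc μ (s k) * ∏ i ∈ I, μ (s i)
        ≤ μ (s k) * μ (⋂ i ∈ I, s i) := by gcongr; exact ih hI
      _ ≤ μ (s k ∩ ⋂ i ∈ I, s i) :=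
        (hs k (mem_insert_self k I)).measure_mul_le_measure_inter hμ
          (isLowerSet_iInter₂ hI)

end Harris

section ProductMeasure

variable {ι : Type*} [Fintype ι] {π : ι → Type*} [∀ i, MeasurableSpace (π i)]

lemma Measure.pi_singleton_mul_pi_singleton [∀ i, LinearOrder (π i)] (ν : ∀ i, Measure (π i))
    [∀ i, SigmaFinite (ν i)] (a b : ∀ i, π i) :
    Measure.pi ν {a} * Measure.pi ν {b} = Measure.pi ν {a ⊓ b} * Measure.pi ν {a ⊔ b} := by
  simp only [Measure.pi_singleton, ← prod_mul_distrib]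
  refine prod_congr rfl fun i _ => ?_
  rcases le_total (a i) (b i) with h | h <;> simp [h, mul_comm]

theorem Measure.pi_inter_eval_preimage_eq_mul [DecidableEq ι] [∀ i, Countable (π i)]
    [∀ i, MeasurableSingletonClass (π i)] (ν : ∀ i, Measure (π i))
    [∀ i, IsProbabilityMeasure (ν i)] {A : Set (∀ i, π i)} {i : ι}
    (hA : ∀ ω x, Function.update ω i x ∈ A ↔ ω ∈ A) (B : Set (π i)) :
    Measure.pi ν (A ∩ Function.eval i ⁻¹' B) = Measure.pi ν A * ν i B := by
  set S : Finset ι := {i}ᶜ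
  set restrict : (∀ k, π k) → ∀ k : S, π k := fun ω k => ω k
  have hind : IndepFun restrict (fun ω (k : ({i} : Finset ι)) => ω k) (Measure.pi ν) :=
    (iIndepFun_pi (X := fun _ => id) fun _ => aemeasurable_id).indepFun_finset
      S {i} (by simp [S]) fun _ => measurable_pi_apply _
  have hA' : A = restrict ⁻¹' (restrict '' A) := by
    refine (Set.subset_preimage_image _ _).antisymm ?_
    rintro ω ⟨ω', hω', heq⟩
    have : ω = Function.update ω' i (ω i) := by
      ext k
      by_cases hk : k = i
      · subst hk; simp
      · simpa [hk] using (congrFun heq ⟨k, by simp [S, hk]⟩).symm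
    rwa [this, hA]
  have hB : Function.eval i ⁻¹' B =
      (fun ω (k : ({i} : Finset ι)) => ω k) ⁻¹' {y | y ⟨i, mem_singleton_self i⟩ ∈ B} :=
    rfl
  rw [hA', hB, hind.measure_inter_preimage_eq_mul _ _ .of_discrete .of_discrete, ← hB, ← hA',
    (measurePreserving_eval ν i).measure_preimage MeasurableSet.of_discrete.nullMeasurableSet]

end ProductMeasure

namespace TAccess

variable {N T : ℕ} {i j : Fin N} {t : ℕ} {ω : TempConfig N T}

lemma mono {ω' : TempConfig N T} (hω : ω ≤ ω') (h : TAccess i j t ω) :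
    TAccess i j t ω' := by
  obtain ⟨f, hf0, hft, hstep⟩ := h
  refine ⟨f, hf0, hft, fun s hs => (hstep s hs).imp_right fun he => ?_⟩
  exact (Bool.le_true _).antisymm (he ▸ hω (f s, f (s + 1), s))

lemma eq_of_zero (h : TAccess i j 0 ω) : i = j := by
  obtain ⟨f, hf0, hft, -⟩ := h
  exact hf0.symm.trans hft

lemma exists_last_step (ht : t < T) (h : TAccess i j (t + 1) ω) :
    ∃ ℓ, TAccess i ℓ t ω ∧ (ℓ = j ∨ ω (ℓ, j, ⟨t, ht⟩) = true) := by
  obtain ⟨f, hf0, hft, hstep⟩ := h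
  refine ⟨f t, ⟨f, hf0, rfl, fun s hs => hstep s (by omega)⟩, ?_⟩
  simpa [hft] using hstep ⟨t, ht⟩ t.lt_succ_self

end TAccess

lemma isUpperSet_setOf_tAccess {N T : ℕ} (i j : Fin N) (t : ℕ) :
    IsUpperSet {ω : TempConfig N T | TAccess i j t ω} :=
  fun _ _ hω h => h.mono hω

lemma tAccess_update_iff {N T : ℕ} {i j : Fin N} {t : ℕ} {ω : TempConfig N T}
    {e : Fin N × Fin N × Fin T} (he : t ≤ e.2.2) (b : Bool) :
    TAccess i j t (Function.update ω e b) ↔ TAccess i j t ω := by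
  have hne (s : Fin T) (hs : (s : ℕ) < t) (u w : Fin N) : (u, w, s) ≠ e := by
    rintro rfl; exact absurd he (by simpa using hs)
  simp only [TAccess]
  refine exists_congr fun f => and_congr_right fun _ => and_congr_right fun _ =>
    forall₂_congr fun s hs => ?_
  rw [Function.update_of_ne (hne s hs _ _)]

section TempMeasure

variable {N T : ℕ} {p : Fin N → Fin N → ℕ → ℝ≥0∞} {hp : ∀ u v t, p u v t ≤ 1}

instance : IsProbabilityMeasure (tempMeasure N T p hp) := by
  unfold tempMeasure; infer_instance

lemma tempMeasure_singleton_mul_singleton_le (a b : TempConfig N T) :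
    tempMeasure N T p hp {a} * tempMeasure N T p hp {b} ≤
      tempMeasure N T p hp {a ⊓ b} * tempMeasure N T p hp {a ⊔ b} :=
  (Measure.pi_singleton_mul_pi_singleton _ a b).le

lemma tempMeasure_inter_edge_open {A : Set (TempConfig N T)} {e : Fin N × Fin N × Fin T}
    (hA : ∀ ω b, Function.update ω e b ∈ A ↔ ω ∈ A) :
    tempMeasure N T p hp (A ∩ {ω | ω e = true}) =
      tempMeasure N T p hp A * p e.1 e.2.1 e.2.2 := by
  have hedge : {ω : TempConfig N T | ω e = true} = Function.eval e ⁻¹' ({true} : Set Bool) :=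
    rfl
  rw [hedge, tempMeasure, Measure.pi_inter_eval_preimage_eq_mul _ hA,
    PMF.toMeasure_apply_singleton _ _ (measurableSet_singleton _)]
  exact congrArg _ (ENNReal.coe_toNNReal (ne_top_of_le_ne_top ENNReal.one_ne_top (hp _ _ _)))

lemma tempMeasure_tAccess_zero_le (i ℓ : Fin N) :
    tempMeasure N T p hp {ω | TAccess i ℓ 0 ω} ≤ if i = ℓ then 1 else 0 := by
  split_ifs with h
  · exact prob_le_one
  · have hempty : {ω : TempConfig N T | TAccess i ℓ 0 ω} = ∅ :=
      Set.eq_empty_of_forall_notMem fun _ hω => h (TAccess.eq_of_zero hω)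
    simp [hempty]

theorem tempMeasure_tAccess_succ_le (hself : ∀ ℓ : Fin N, ∀ t, p ℓ ℓ t = 1) {t : ℕ}
    (ht : t < T) (i j : Fin N) {β : Fin N → ℝ≥0∞}
    (hβ : ∀ ℓ, tempMeasure N T p hp {ω | TAccess i ℓ t ω} ≤ β ℓ) :
    tempMeasure N T p hp {ω | TAccess i j (t + 1) ω} ≤
      1 - ∏ ℓ, (1 - β ℓ * p ℓ j t) := by
  set μ := tempMeasure N T p hp
  let A ℓ : Set (TempConfig N T) := {ω | TAccess i ℓ t ω}
  let D ℓ : Set (TempConfig N T) := {ω | ℓ = j ∨ ω (ℓ, j, ⟨t, ht⟩) = true}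
  have hcover : {ω | TAccess i j (t + 1) ω} ⊆ ⋃ ℓ, A ℓ ∩ D ℓ := fun ω h => by
    simpa [A, D] using h.exists_last_step ht
  have hlower ℓ : IsLowerSet (A ℓ ∩ D ℓ)ᶜ := by
    refine ((isUpperSet_setOf_tAccess i ℓ t).inter ?_).compl
    rintro ω ω' hω (h | h)
    · exact .inl h
    · exact .inr ((Bool.le_true _).antisymm (h ▸ hω _))
  have hindep ℓ : μ (A ℓ ∩ D ℓ) = μ (A ℓ) * p ℓ j t := by
    rcases eq_or_ne ℓ j with rfl | hℓ
    · simp [D, hself]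
    · have hD : D ℓ = {ω | ω (ℓ, j, ⟨t, ht⟩) = true} := by simp [D, hℓ]
      rw [hD]
      exact tempMeasure_inter_edge_open fun _ b =>
        tAccess_update_iff (e := (ℓ, j, ⟨t, ht⟩)) le_rfl b
  calc μ {ω | TAccess i j (t + 1) ω} ≤ μ (⋃ ℓ, A ℓ ∩ D ℓ) := measure_mono hcover
    _ = 1 - μ (⋂ ℓ ∈ univ, (A ℓ ∩ D ℓ)ᶜ) := by
      rw [← prob_compl_eq_one_sub .of_discrete]
      simp
    _ ≤ 1 - ∏ ℓ, μ (A ℓ ∩ D ℓ)ᶜ := by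
      gcongr
      exact IsLowerSet.prod_measure_le_measure_biInter tempMeasure_singleton_mul_singleton_le _
        fun ℓ _ => hlower ℓ
    _ = 1 - ∏ ℓ, (1 - μ (A ℓ) * p ℓ j t) := by
      simp only [prob_compl_eq_one_sub MeasurableSet.of_discrete, hindep]
    _ ≤ 1 - ∏ ℓ, (1 - β ℓ * p ℓ j t) := by
      gcongr
      exact hβ _

end TempMeasure

lemma alphaE_zero_eq_one_sub_prod {N : ℕ} {p : Fin N → Fin N → ℕ → ℝ≥0∞}
    (hp : ∀ u v t, p u v t ≤ 1) (i j : Fin N) :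
    alphaE p i 0 j = 1 - ∏ ℓ, (1 - (if i = ℓ then 1 else 0) * p ℓ j 0) := by
  rw [alphaE, Fintype.prod_eq_single i fun ℓ hℓ => by simp [Ne.symm hℓ]]
  simp [ENNReal.sub_sub_cancel ENNReal.one_ne_top (hp i j 0)]

/-- Upper bound on the accessibility probability: under the waiting convention
`p_{ℓℓ}(t) = 1` (whence `α_{ii}(t) = 1`), for every `i, j` and every horizon
`T = S + 1 ≥ 1` we have `P(i →^T j) ≤ α_{ij}(T)`. -/
theorem access_prob_le_alpha (N : ℕ) (p : Fin N → Fin N → ℕ → ℝ≥0∞)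
    (hp : ∀ u v t, p u v t ≤ 1) (hself : ∀ ℓ : Fin N, ∀ t, p ℓ ℓ t = 1) :
    ∀ (i j : Fin N) (S : ℕ),
      tempMeasure N (S + 1) p hp {ω | TAccess i j (S + 1) ω} ≤ alphaE p i S j := by
  intro i j S
  suffices h : ∀ t < S + 1, ∀ j,
      tempMeasure N (S + 1) p hp {ω | TAccess i j (t + 1) ω} ≤ alphaE p i t j from
    h S S.lt_succ_self j
  intro t ht
  induction t with
  | zero =>
    intro j
    rw [alphaE_zero_eq_one_sub_prod hp]
    exact tempMeasure_tAccess_succ_le hself ht i j (tempMeasure_tAccess_zero_le i)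
  | succ t ih => exact fun j => tempMeasure_tAccess_succ_le hself ht i j (ih (by omega))
end
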